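/- arXiv:1407.5486 — 2 statements merged into one kernel-verified Lean document; each statement's English description precedes it below -/
import Mathlib

section
/- Let A be a bounded linear operator on ℓ²(ℤ) and let (Aₙ)_{n∈ℕ} be a sequence of bounded linear operators on ℓ²(ℤ) that converges to A in the weak operator topology. Then N(A) ⊆ liminf_{n→∞} N(Aₙ); that is, every z ∈ N(A) is the limit of a sequence (zₙ)_{n∈ℕ} with zₙ ∈ N(Aₙ) for every n. -/
noncomputable section
open Filter Complex Topology
open scoped ENNReal

/-- The Hilbert space ℓ²(ℤ). -/
abbrev HZ := lp (fun _ : ℤ => ℂ) 2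

/-- The standard orthonormal basis of ℓ²(ℤ). -/
def eZ (i : ℤ) : HZ := lp.single 2 i 1

/-- Matrix entry `A_{i,j} = ⟨A e_j, e_i⟩` (inner product linear in the first slot,
here written in Mathlib's convention which is conjugate-linear in the first slot). -/
def entry (A : HZ →L[ℂ] HZ) (i j : ℤ) : ℂ := inner ℂ (eZ i) (A (eZ j))

/-- The (closed) numerical range `N(A) = clos {⟨Ax,x⟩ : ‖x‖ = 1}`. -/
def numRange (A : HZ →L[ℂ] HZ) : Set ℂ :=
  closure {z | ∃ x : HZ, ‖x‖ = 1 ∧ (inner ℂ x (A x) : ℂ) = z}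

/-- The numerical abscissa `r₀(A) = max {Re z : z ∈ N(A)}`. -/
def r0 (A : HZ →L[ℂ] HZ) : ℝ := sSup (Complex.re '' numRange A)

/-- The rotated numerical abscissa `r_φ(A) = max {Re z : z ∈ N(e^{iφ}A)}`. -/
def rphi (φ : ℝ) (A : HZ →L[ℂ] HZ) : ℝ := r0 (Complex.exp (φ * Complex.I) • A)

lemma memShift (k : ℤ) (x : HZ) : Memℓp (fun j => x (j - k)) 2 := by
  have h := lp.memℓp x
  rw [memℓp_gen_iff (by norm_num)] at h ⊢
  simpa [Function.comp_def] using ((Equiv.subRight k).summable_iff (f := fun i => ‖x i‖ ^ (2:ℝ≥0∞).toReal)).mpr h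

def shiftLM (k : ℤ) : HZ →ₗ[ℂ] HZ where
  toFun x := ⟨fun j => x (j - k), memShift k x⟩
  map_add' x y := by ext j; simp [lp.coeFn_add]; try rfl
  map_smul' c x := by ext j; simp [lp.coeFn_smul]

lemma shift_norm (k : ℤ) (x : HZ) : ‖shiftLM k x‖ = ‖x‖ := by
  rw [lp.norm_eq_tsum_rpow (by norm_num) x, lp.norm_eq_tsum_rpow (by norm_num) (shiftLM k x)]
  congr 1
  exact (Equiv.subRight k).tsum_eq (f := fun i => ‖x i‖ ^ (2:ℝ≥0∞).toReal)

/-- The shift operator `V_k` on ℓ²(ℤ), `(V_k x)_j = x_{j-k}`. -/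
def Vshift (k : ℤ) : HZ →L[ℂ] HZ :=
  LinearIsometry.toContinuousLinearMap ⟨shiftLM k, shift_norm k⟩

/-- `B` is a limit operator of `A`: there is a sequence of integers `h` with `|h m| → ∞`
such that `V_{-h_m} A V_{h_m} → B` strongly. -/
def IsLimOp (A B : HZ →L[ℂ] HZ) : Prop :=
  ∃ h : ℕ → ℤ, Tendsto (fun m => |h m|) atTop atTop ∧
    ∀ x : HZ, Tendsto (fun m => Vshift (-(h m)) (A (Vshift (h m) x))) atTop (𝓝 (B x))

/-- The operator spectrum: the set of all limit operators of `A`. -/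
def opSpec (A : HZ →L[ℂ] HZ) : Set (HZ →L[ℂ] HZ) := {B | IsLimOp A B}

/-- A band operator: only finitely many diagonals are nonzero. -/
def IsBandOp (A : HZ →L[ℂ] HZ) : Prop :=
  ∃ N : ℕ, ∀ i j : ℤ, (N : ℤ) < |i - j| → entry A i j = 0

/-- `M(U_n, …, U_m)`: the k-th diagonal has entries in `U k` for `n ≤ k ≤ m`,
and all other diagonals vanish. -/
def Mset (n m : ℤ) (U : ℤ → Set ℂ) : Set (HZ →L[ℂ] HZ) :=
  {A | ∀ i k : ℤ, (n ≤ k → k ≤ m → entry A (i + k) i ∈ U k) ∧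
      (¬(n ≤ k ∧ k ≤ m) → entry A (i + k) i = 0)}

/-- The orthogonal projection `P_{k,l}` onto `span{e_k, …, e_l}`. -/
def projIcc (k l : ℤ) : HZ →L[ℂ] HZ :=
  ∑ i ∈ Finset.Icc k l, (innerSL ℂ (eZ i)).smulRight (eZ i)

/-- The finite matrix `b` placed in `ℓ²(ℤ)` with rows/columns at positions `k, …, k+s`. -/
def embedMat (k : ℤ) (s : ℕ) (b : Fin (s+1) → Fin (s+1) → ℂ) : HZ →L[ℂ] HZ :=
  ∑ p : Fin (s+1), ∑ q : Fin (s+1),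
    b p q • (innerSL ℂ (eZ (k + (q : ℤ)))).smulRight (eZ (k + (p : ℤ)))

/-- A finite square matrix whose k-th diagonal entries lie in `U k` for `n ≤ k ≤ m`
and whose remaining entries vanish. -/
def finPattern (n m : ℤ) (U : ℤ → Set ℂ) (s : ℕ) (b : Fin (s+1) → Fin (s+1) → ℂ) : Prop :=
  ∀ p q : Fin (s+1), (n ≤ (p : ℤ) - (q : ℤ) → (p : ℤ) - (q : ℤ) ≤ m →
      b p q ∈ U ((p : ℤ) - (q : ℤ))) ∧
    (¬(n ≤ (p : ℤ) - (q : ℤ) ∧ (p : ℤ) - (q : ℤ) ≤ m) → b p q = 0)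

/-- Pseudo-ergodic operators `ΨE(U_n, …, U_m)`. -/
def PsiE (n m : ℤ) (U : ℤ → Set ℂ) : Set (HZ →L[ℂ] HZ) :=
  {A | A ∈ Mset n m U ∧ ∀ ε > (0:ℝ), ∀ (s : ℕ) (b : Fin (s+1) → Fin (s+1) → ℂ),
    finPattern n m U s b → ∃ k : ℤ,
      ‖projIcc k (k + s) ∘L A ∘L projIcc k (k + s) - embedMat k s b‖ ≤ ε}

/-- The essential spectrum: the set of `λ` such that `A - λI` is not Fredholm. -/
def essSpec (A : HZ →L[ℂ] HZ) : Set ℂ :=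
  {lam | ¬(FiniteDimensional ℂ (LinearMap.ker ((A - lam • (1 : HZ →L[ℂ] HZ) : HZ →L[ℂ] HZ) : HZ →ₗ[ℂ] HZ)) ∧
      FiniteDimensional ℂ ((LinearMap.range ((A - lam • (1 : HZ →L[ℂ] HZ) : HZ →L[ℂ] HZ) : HZ →ₗ[ℂ] HZ))ᗮ))}

/-- The Hilbert space ℓ²(ℕ). -/
abbrev HN := lp (fun _ : ℕ => ℂ) 2

def eN (i : ℕ) : HN := lp.single 2 i 1

def entryN (A : HN →L[ℂ] HN) (i j : ℕ) : ℂ := inner ℂ (eN i) (A (eN j))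

def numRangeN (A : HN →L[ℂ] HN) : Set ℂ :=
  closure {z | ∃ x : HN, ‖x‖ = 1 ∧ (inner ℂ x (A x) : ℂ) = z}

def r0N (A : HN →L[ℂ] HN) : ℝ := sSup (Complex.re '' numRangeN A)

/-! Each `⟨x, A x⟩` with `‖x‖ = 1` is the limit of `⟨x, Aₙ x⟩ ∈ N(Aₙ)`, so the sphere values of `A`
lie in the Kuratowski lower limit of the sets `N(Aₙ)`. That lower limit is closed: it is the set
where the equi-Lipschitz functions `z ↦ infDist z N(Aₙ)` tend to `0`. Hence it also contains
their closure `N(A)`. -/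

def kuratowskiLiminf {Y : Type*} [TopologicalSpace Y] (S : ℕ → Set Y) : Set Y :=
  {z | ∃ zs : ℕ → Y, (∀ n, zs n ∈ S n) ∧ Tendsto zs atTop (𝓝 z)}

section KuratowskiLiminf

open Metric

variable {Y : Type*} [PseudoMetricSpace Y] {S : ℕ → Set Y} {z : Y}

theorem mem_kuratowskiLiminf_iff_tendsto_infDist (hS : ∀ n, (S n).Nonempty) :
    z ∈ kuratowskiLiminf S ↔ Tendsto (fun n => infDist z (S n)) atTop (𝓝 0) := by
  constructor
  · rintro ⟨zs, hmem, hlim⟩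
    refine squeeze_zero (fun n => infDist_nonneg) (fun n => infDist_le_dist_of_mem (hmem n)) ?_
    simpa only [dist_comm z] using tendsto_iff_dist_tendsto_zero.mp hlim
  · intro hlim
    have hnear : ∀ n, ∃ y ∈ S n, dist z y < infDist z (S n) + 1 / (n + 1) := fun n =>
      (infDist_lt_iff (hS n)).mp (lt_add_of_pos_right _ Nat.one_div_pos_of_nat)
    choose zs hmem hdist using hnear
    refine ⟨zs, hmem, tendsto_iff_dist_tendsto_zero.mpr ?_⟩
    have hbound : Tendsto (fun n : ℕ => infDist z (S n) + 1 / (n + 1)) atTop (𝓝 0) := by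
      simpa using hlim.add tendsto_one_div_add_atTop_nhds_zero_nat
    refine squeeze_zero (fun n => dist_nonneg) (fun n => ?_) hbound
    rw [dist_comm]
    exact (hdist n).le

theorem isClosed_kuratowskiLiminf (S : ℕ → Set Y) : IsClosed (kuratowskiLiminf S) := by
  by_cases hS : ∀ n, (S n).Nonempty
  · rw [show kuratowskiLiminf S = {w | Tendsto (fun n => infDist w (S n)) atTop (𝓝 0)} from
      Set.ext fun _ => mem_kuratowskiLiminf_iff_tendsto_infDist hS]
    exact (LipschitzWith.uniformEquicontinuous _ 1 fun n => lipschitz_infDist_pt (S n)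
      ).equicontinuous.isClosed_setOfPred_tendsto continuous_const
  · obtain ⟨n, hn⟩ := not_forall.mp hS
    rw [Set.not_nonempty_iff_eq_empty] at hn
    convert isClosed_empty
    exact Set.eq_empty_of_forall_notMem fun _ ⟨zs, hmem, _⟩ => by simpa [hn] using hmem n

end KuratowskiLiminf

/-- If `Aₙ → A` in the weak operator topology, then every point of the
numerical range of `A` is a limit of a sequence of points `zₙ ∈ N(Aₙ)`. -/
theorem numRange_subset_liminf_of_weak_tendsto
    (A : HZ →L[ℂ] HZ) (As : ℕ → (HZ →L[ℂ] HZ))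
    (hweak : ∀ x y : HZ,
      Tendsto (fun n => (inner ℂ y ((As n) x) : ℂ)) atTop (𝓝 (inner ℂ y (A x) : ℂ)))
    (z : ℂ) (hz : z ∈ numRange A) :
    ∃ zs : ℕ → ℂ, (∀ n, zs n ∈ numRange (As n)) ∧ Tendsto zs atTop (𝓝 z) := by
  have hsphere : {w | ∃ x : HZ, ‖x‖ = 1 ∧ (inner ℂ x (A x) : ℂ) = w} ⊆
      kuratowskiLiminf (numRange ∘ As) := by
    rintro _ ⟨x, hx, rfl⟩
    exact ⟨fun n => inner ℂ x (As n x), fun n => subset_closure ⟨x, hx, rfl⟩, hweak x x⟩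
  exact closure_minimal hsphere (isClosed_kuratowskiLiminf _) hz
end
end

section
/- Let n ≤ m be integers, let U_n, …, U_m ⊂ ℂ be nonempty compact sets and let A ∈ ΨE(U_n,…,U_m). Then N(A) = clos(⋃_{B ∈ M_per(U_n,…,U_m)} N(B)), the closure of the union of the numerical ranges of all periodic operators in M(U_n,…,U_m). -/
noncomputable section
open Filter Complex Topology
open scoped ENNReal

/-- The set of periodic operators in `M(U_n, …, U_m)`. -/
def Mper (n m : ℤ) (U : ℤ → Set ℂ) : Set (HZ →L[ℂ] HZ) :=
  {B | B ∈ Mset n m U ∧ ∃ p : ℤ, 1 ≤ p ∧ ∀ i j : ℤ, entry B (i + p) (j + p) = entry B i j}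

/-!
Both sides are closures of the values `⟪x, T x⟫` at unit vectors `x` supported on a finite window
`a, …, a + s`. For such `x`, repeating the columns `a, …, a + s` of `A` along the diagonals with
period `s + 1` gives a periodic operator in `M(U_n, …, U_m)` with the same value at `x`.
Conversely, for `B ∈ M(U_n, …, U_m)` the section of `B` on the window is a pattern, which
pseudo-ergodicity finds, up to `ε`, as the section of `A` on some window `k, …, k + s`; shifting
`x` there gives a value of `A` within `ε` of `⟪x, B x⟫`.
-/

open scoped InnerProductSpace

lemma eZ_apply (i j : ℤ) : eZ i j = if j = i then 1 else 0 := by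
  simp [eZ, lp.single_apply, Pi.single_apply]

lemma inner_eZ_left (i : ℤ) (x : HZ) : ⟪eZ i, x⟫_ℂ = x i := by
  simp [eZ, lp.inner_single_left]

lemma inner_eZ_right (i : ℤ) (x : HZ) : ⟪x, eZ i⟫_ℂ = starRingEnd ℂ (x i) := by
  simp [eZ, lp.inner_single_right]

lemma norm_eZ (i : ℤ) : ‖eZ i‖ = 1 := by
  simp [eZ, lp.norm_single]

lemma norm_entry_le (A : HZ →L[ℂ] HZ) (i j : ℤ) : ‖entry A i j‖ ≤ ‖A‖ := by
  calc ‖entry A i j‖ ≤ ‖eZ i‖ * (‖A‖ * ‖eZ j‖) :=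
        (norm_inner_le_norm _ _).trans (by gcongr; exact A.le_opNorm _)
    _ = ‖A‖ := by simp [norm_eZ]

lemma Vshift_apply (k : ℤ) (x : HZ) (j : ℤ) : Vshift k x j = x (j - k) := rfl

lemma norm_Vshift (k : ℤ) (x : HZ) : ‖Vshift k x‖ = ‖x‖ := shift_norm k x

lemma Vshift_eZ (k j : ℤ) : Vshift k (eZ j) = eZ (j + k) := by
  ext i
  simp only [Vshift_apply, eZ_apply, sub_eq_iff_eq_add]

lemma smul_eZ (i : ℤ) (c : ℂ) : c • eZ i = lp.single 2 i c := by
  rw [eZ, ← lp.single_smul, smul_eq_mul, mul_one]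

lemma projIcc_apply (k l : ℤ) (x : HZ) : projIcc k l x = ∑ i ∈ Finset.Icc k l, x i • eZ i := by
  simp [projIcc, inner_eZ_left]

lemma projIcc_apply_apply (k l : ℤ) (x : HZ) (j : ℤ) :
    projIcc k l x j = if j ∈ Finset.Icc k l then x j else 0 := by
  simp only [projIcc_apply, smul_eZ, lp.coeFn_sum, Finset.sum_apply, lp.single_apply,
    Pi.single_apply, Finset.sum_ite_eq]

lemma projIcc_eq_self {k l : ℤ} {x : HZ} (hx : ∀ i ∉ Finset.Icc k l, x i = 0) :
    projIcc k l x = x := by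
  ext j
  rw [projIcc_apply_apply]
  split_ifs with h
  · rfl
  · exact (hx j h).symm

lemma inner_projIcc_right (k l : ℤ) (x y : HZ) : ⟪x, projIcc k l y⟫_ℂ = ⟪projIcc k l x, y⟫_ℂ := by
  simp only [projIcc_apply, inner_sum, sum_inner, inner_smul_right, inner_smul_left,
    inner_eZ_left, inner_eZ_right]
  exact Finset.sum_congr rfl fun _ _ => mul_comm _ _

lemma tendsto_projIcc_neg (x : HZ) :
    Tendsto (fun N : ℕ => projIcc (-N) N x) atTop (𝓝 x) := by
  simp only [projIcc_apply, smul_eZ]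
  exact (lp.hasSum_single ENNReal.ofNat_ne_top x).comp Finset.tendsto_Icc_neg

lemma Finset.sum_Icc_eq_sum_fin {M : Type*} [AddCommMonoid M] (f : ℤ → M) (a : ℤ) (s : ℕ) :
    ∑ i ∈ Finset.Icc a (a + s), f i = ∑ p : Fin (s + 1), f (a + p) := by
  refine (Finset.sum_nbij (fun p : Fin (s + 1) => a + p) (fun p _ => ?_) (fun p _ q _ h => ?_)
    (fun i hi => ?_) fun _ _ => rfl).symm
  · simp only [Finset.mem_Icc]; omega
  · simpa [Fin.ext_iff] using h
  · simp only [Finset.coe_Icc, Set.mem_Icc] at hi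
    exact ⟨⟨(i - a).toNat, by omega⟩, Finset.mem_coe.2 (Finset.mem_univ _), by simp; omega⟩

lemma inner_apply_eq_sum_entry {x : HZ} {a : ℤ} {s : ℕ} (hx : ∀ i ∉ Finset.Icc a (a + s), x i = 0)
    (T : HZ →L[ℂ] HZ) :
    ⟪x, T x⟫_ℂ = ∑ p : Fin (s + 1), ∑ q : Fin (s + 1),
      starRingEnd ℂ (x (a + p)) * x (a + q) * entry T (a + p) (a + q) := by
  have hsum : x = ∑ p : Fin (s + 1), x (a + p) • eZ (a + p) := by
    rw [← Finset.sum_Icc_eq_sum_fin (fun i => x i • eZ i), ← projIcc_apply, projIcc_eq_self hx]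
  conv_lhs => rw [hsum]
  simp only [map_sum, map_smul, sum_inner, inner_sum, inner_smul_left, inner_smul_right, entry,
    Finset.mul_sum]
  rw [Finset.sum_comm]
  exact Finset.sum_congr rfl fun p _ => Finset.sum_congr rfl fun q _ => by ring

def finSuppSphere : Set HZ :=
  {x | ‖x‖ = 1 ∧ ∃ (a : ℤ) (s : ℕ), ∀ i ∉ Finset.Icc a (a + s), x i = 0}

lemma sphere_subset_closure_finSuppSphere : Metric.sphere (0 : HZ) 1 ⊆ closure finSuppSphere := by
  intro x hx
  rw [mem_sphere_zero_iff_norm] at hx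
  have hP := tendsto_projIcc_neg x
  have hnorm : Tendsto (fun N : ℕ => ‖projIcc (-N) N x‖) atTop (𝓝 1) := hx ▸ hP.norm
  refine mem_closure_of_tendsto (b := atTop)
    (f := fun N : ℕ => ((‖projIcc (-N) N x‖ : ℂ))⁻¹ • projIcc (-N) N x) ?_ ?_
  · simpa using ((Complex.continuous_ofReal.tendsto 1).comp hnorm).inv₀ one_ne_zero |>.smul hP
  · filter_upwards [hnorm.eventually_ne one_ne_zero] with N hN
    refine ⟨by simp [norm_smul, hN], -N, 2 * N, fun i hi => ?_⟩
    have hi' : i ∉ Finset.Icc (-(N : ℤ)) N := by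
      rwa [show -(N : ℤ) + ((2 * N : ℕ) : ℤ) = N by push_cast; ring] at hi
    simp [projIcc_apply_apply, hi']

lemma numRange_eq_closure_image_finSuppSphere (T : HZ →L[ℂ] HZ) :
    numRange T = closure ((fun x => ⟪x, T x⟫_ℂ) '' finSuppSphere) := by
  have hq : Continuous fun x : HZ => ⟪x, T x⟫_ℂ := continuous_id.inner T.continuous
  have hsphere : {z | ∃ x : HZ, ‖x‖ = 1 ∧ ⟪x, T x⟫_ℂ = z} =
      (fun x => ⟪x, T x⟫_ℂ) '' Metric.sphere 0 1 := by
    ext z; simp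
  rw [numRange, hsphere]
  refine subset_antisymm (closure_minimal ?_ isClosed_closure)
    (closure_mono (Set.image_mono fun x hx => mem_sphere_zero_iff_norm.2 hx.1))
  exact (Set.image_mono sphere_subset_closure_finSuppSphere).trans
    (image_closure_subset_closure_image hq)

lemma norm_mul_le_of_norm_le {c : ℤ → ℂ} {C : ℝ} (hc : ∀ j, ‖c j‖ ≤ C) (x : HZ) (j : ℤ) :
    ‖c j * x j‖ ≤ C * ‖x j‖ := by
  rw [norm_mul]; exact mul_le_mul_of_nonneg_right (hc j) (norm_nonneg _)

def diagOp (c : ℤ → ℂ) {C : ℝ} (hc : ∀ j, ‖c j‖ ≤ C) : HZ →L[ℂ] HZ :=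
  LinearMap.mkContinuous
    { toFun := fun x => ⟨fun j => c j * x j,
        ((lp.memℓp x).norm.const_mul C).mono (norm_mul_le_of_norm_le hc x)⟩
      map_add' := fun x y => by ext j; exact mul_add _ _ _
      map_smul' := fun a x => by ext j; simp [mul_left_comm] }
    C fun x => by
      have hC : 0 ≤ C := (norm_nonneg _).trans (hc 0)
      calc _ ≤ ‖(C : ℂ) • x‖ := lp.norm_mono two_ne_zero fun j => by
              rw [lp.coeFn_smul, Pi.smul_apply, norm_smul, Complex.norm_real,
                Real.norm_of_nonneg hC]
              exact norm_mul_le_of_norm_le hc x j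
        _ = C * ‖x‖ := by rw [norm_smul, Complex.norm_real, Real.norm_of_nonneg hC]

lemma diagOp_eZ (c : ℤ → ℂ) {C : ℝ} (hc : ∀ j, ‖c j‖ ≤ C) (j : ℤ) :
    diagOp c hc (eZ j) = c j • eZ j := by
  ext i
  change c i * eZ j i = c j * eZ j i
  rw [eZ_apply]
  split_ifs with h <;> simp [h]

def bandOp (n m : ℤ) (c : ℤ → ℤ → ℂ) {C : ℝ} (hc : ∀ k j, ‖c k j‖ ≤ C) : HZ →L[ℂ] HZ :=
  ∑ k ∈ Finset.Icc n m, Vshift k ∘L diagOp (c k) (hc k)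

lemma entry_bandOp (n m : ℤ) (c : ℤ → ℤ → ℂ) {C : ℝ} (hc : ∀ k j, ‖c k j‖ ≤ C) (i j : ℤ) :
    entry (bandOp n m c hc) i j = if n ≤ i - j ∧ i - j ≤ m then c (i - j) j else 0 := by
  have hterm : ∀ k, ⟪eZ i, (Vshift k ∘L diagOp (c k) (hc k)) (eZ j)⟫_ℂ =
      if i - j = k then c k j else 0 := fun k => by
    rw [ContinuousLinearMap.comp_apply, diagOp_eZ, map_smul, Vshift_eZ, inner_smul_right,
      inner_eZ_left, eZ_apply]
    split_ifs <;> first | omega | simp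
  simp only [entry, bandOp, sum_apply, inner_sum, hterm, Finset.sum_ite_eq, Finset.mem_Icc]

lemma add_fin_mem_Icc (a : ℤ) {s : ℕ} (p : Fin (s + 1)) : a + p ∈ Finset.Icc a (a + s) := by
  simp only [Finset.mem_Icc]; omega

def periodize (A : HZ →L[ℂ] HZ) (n m a : ℤ) (s : ℕ) : HZ →L[ℂ] HZ :=
  bandOp n m (fun k j => entry A (a + (j - a) % (s + 1) + k) (a + (j - a) % (s + 1)))
    fun _ _ => norm_entry_le A _ _

section Periodize

variable {n m : ℤ} {U : ℤ → Set ℂ} {A : HZ →L[ℂ] HZ}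

lemma periodize_mem_Mper (hA : A ∈ Mset n m U) (a : ℤ) (s : ℕ) :
    periodize A n m a s ∈ Mper n m U := by
  refine ⟨fun i k => ⟨fun hn hm => ?_, fun hk => ?_⟩, s + 1, by omega, fun i j => ?_⟩
  · rw [periodize, entry_bandOp, if_pos (by omega), add_sub_cancel_left]
    exact (hA _ k).1 hn hm
  · rw [periodize, entry_bandOp, if_neg (by omega)]
  · simp only [periodize, entry_bandOp, add_sub_add_right_eq_sub,
      show j + (s + 1) - a = j - a + (s + 1) * 1 by ring, Int.add_mul_emod_self_left]

lemma entry_periodize_of_mem (hA : A ∈ Mset n m U) {a : ℤ} {s : ℕ} (i : ℤ) {j : ℤ}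
    (hj : j ∈ Finset.Icc a (a + s)) : entry (periodize A n m a s) i j = entry A i j := by
  rw [Finset.mem_Icc] at hj
  have hmod : (j - a) % (s + 1) = j - a := Int.emod_eq_of_lt (by omega) (by omega)
  rw [periodize, entry_bandOp, hmod, add_sub_cancel, add_sub_cancel]
  split_ifs with h
  · rfl
  · simpa using ((hA j (i - j)).2 h).symm

lemma inner_periodize_apply (hA : A ∈ Mset n m U) {x : HZ} {a : ℤ} {s : ℕ}
    (hx : ∀ i ∉ Finset.Icc a (a + s), x i = 0) :
    ⟪x, periodize A n m a s x⟫_ℂ = ⟪x, A x⟫_ℂ := by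
  simp only [inner_apply_eq_sum_entry hx, entry_periodize_of_mem hA _ (add_fin_mem_Icc a _)]

lemma image_finSuppSphere_subset_iUnion_numRange_Mper (hA : A ∈ Mset n m U) :
    (fun x => ⟪x, A x⟫_ℂ) '' finSuppSphere ⊆ ⋃ B ∈ Mper n m U, numRange B := by
  rintro _ ⟨x, ⟨hx1, a, s, hx⟩, rfl⟩
  exact Set.mem_biUnion (periodize_mem_Mper hA a s)
    (subset_closure ⟨x, hx1, inner_periodize_apply hA hx⟩)

end Periodize

lemma finPattern_entry {n m : ℤ} {U : ℤ → Set ℂ} {B : HZ →L[ℂ] HZ} (hB : B ∈ Mset n m U)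
    (a : ℤ) (s : ℕ) : finPattern n m U s fun p q => entry B (a + p) (a + q) := by
  intro p q
  simpa only [show a + (q : ℤ) + (p - q) = a + p by ring] using hB (a + q) (p - q)

lemma inner_embedMat_apply (k : ℤ) (s : ℕ) (b : Fin (s + 1) → Fin (s + 1) → ℂ) (y : HZ) :
    ⟪y, embedMat k s b y⟫_ℂ =
      ∑ p : Fin (s + 1), ∑ q : Fin (s + 1), starRingEnd ℂ (y (k + p)) * y (k + q) * b p q := by
  simp only [embedMat, sum_apply, inner_sum, smul_apply, inner_smul_right,
    ContinuousLinearMap.smulRight_apply, innerSL_apply_apply, inner_eZ_left, inner_eZ_right]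
  exact Finset.sum_congr rfl fun p _ => Finset.sum_congr rfl fun q _ => by ring

lemma norm_inner_apply_le_opNorm {𝕜 E : Type*} [RCLike 𝕜] [NormedAddCommGroup E]
    [InnerProductSpace 𝕜 E] (T : E →L[𝕜] E) {y : E} (hy : ‖y‖ = 1) : ‖⟪y, T y⟫_𝕜‖ ≤ ‖T‖ :=
  calc ‖⟪y, T y⟫_𝕜‖ ≤ ‖y‖ * (‖T‖ * ‖y‖) :=
        (norm_inner_le_norm _ _).trans (by gcongr; exact T.le_opNorm y)
    _ = ‖T‖ := by rw [hy, one_mul, mul_one]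

lemma image_finSuppSphere_subset_numRange {n m : ℤ} {U : ℤ → Set ℂ} {A B : HZ →L[ℂ] HZ}
    (hA : A ∈ PsiE n m U) (hB : B ∈ Mset n m U) :
    (fun x => ⟪x, B x⟫_ℂ) '' finSuppSphere ⊆ numRange A := by
  rintro _ ⟨x, ⟨hx1, a, s, hx⟩, rfl⟩
  dsimp only
  refine Metric.mem_closure_iff.2 fun ε hε => ?_
  obtain ⟨k, hk⟩ := hA.2 (ε / 2) (by positivity) s _ (finPattern_entry hB a s)
  set P := projIcc k (k + s)
  set E := embedMat k s fun p q => entry B (a + p) (a + q)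
  -- `y` is `x` moved to the window `k, …, k + s` where `A` reproduces the pattern of `B`.
  set y := Vshift (k - a) x
  have hyx : ∀ i, y i = x (i - (k - a)) := fun i => rfl
  have hy : ∀ i ∉ Finset.Icc k (k + s), y i = 0 := fun i hi => by
    rw [hyx]; exact hx _ (by simp only [Finset.mem_Icc] at hi ⊢; omega)
  have hPAP : ⟪y, (P ∘L A ∘L P) y⟫_ℂ = ⟪y, A y⟫_ℂ := by
    simp only [P, ContinuousLinearMap.comp_apply, inner_projIcc_right, projIcc_eq_self hy]
  have hE : ⟪y, E y⟫_ℂ = ⟪x, B x⟫_ℂ := by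
    simp only [E, inner_embedMat_apply, inner_apply_eq_sum_entry hx, hyx,
      show ∀ p : ℤ, k + p - (k - a) = a + p from fun p => by ring]
  refine ⟨⟪y, A y⟫_ℂ, ⟨y, (norm_Vshift _ _).trans hx1, rfl⟩, ?_⟩
  rw [dist_comm, dist_eq_norm, ← hPAP, ← hE, ← inner_sub_right, ← sub_apply]
  calc _ ≤ ‖P ∘L A ∘L P - E‖ := norm_inner_apply_le_opNorm _ ((norm_Vshift _ _).trans hx1)
    _ < ε := hk.trans_lt (half_lt_self hε)

theorem numRange_eq_closure_iUnion_periodic_of_pseudoErgodic_general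
    (n m : ℤ) (U : ℤ → Set ℂ)
    (A : HZ →L[ℂ] HZ) (hA : A ∈ PsiE n m U) :
    numRange A = closure (⋃ B ∈ Mper n m U, numRange B) := by
  refine subset_antisymm ?_ (closure_minimal (Set.iUnion₂_subset fun B hB => ?_) isClosed_closure)
  · rw [numRange_eq_closure_image_finSuppSphere]
    exact closure_mono (image_finSuppSphere_subset_iUnion_numRange_Mper hA.1)
  · rw [numRange_eq_closure_image_finSuppSphere]
    exact closure_minimal (image_finSuppSphere_subset_numRange hA hB.1) isClosed_closure

/-- For pseudo-ergodic `A`,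
`N(A) = clos(⋃_{B ∈ M_per(U_n,…,U_m)} N(B))`. -/
theorem numRange_eq_closure_iUnion_periodic_of_pseudoErgodic
    (n m : ℤ) (hnm : n ≤ m) (U : ℤ → Set ℂ)
    (hU : ∀ k : ℤ, n ≤ k → k ≤ m → (U k).Nonempty ∧ IsCompact (U k))
    (A : HZ →L[ℂ] HZ) (hA : A ∈ PsiE n m U) :
    numRange A = closure (⋃ B ∈ Mper n m U, numRange B) :=
  numRange_eq_closure_iUnion_periodic_of_pseudoErgodic_general n m U A hA
end
end
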